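/- arXiv:1506.00078 — 3 statements merged into one kernel-verified Lean document; each statement's English description precedes it below -/
import Mathlib

section
/- Let L ≥ 3 be odd, a smooth with a(x) ≠ 0 everywhere, f(x) = (a(x)x₃^L, b(x)x₃, 0), g = (0,0,1), V(x) = ½x₁² + x₂^{L+1}/(L+1) + ½x₃². At points x = (x₁, 0, 0) with x₁ ≠ 0, the L-fold iterated bracket satisfies ([...[[f,g],g],...,g]V)(x) ≠ 0 (with g appearing L times), its value being (−1)^L · L! · a(x₁,0,0) · x₁. -/
noncomputable section

open Set

/-- Lie bracket with the paper's convention `[X,Y] = (DY)X - (DX)Y`. -/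
def lieB {n : ℕ} (X Y : (Fin n → ℝ) → (Fin n → ℝ)) : (Fin n → ℝ) → (Fin n → ℝ) :=
  fun x => fderiv ℝ Y x (X x) - fderiv ℝ X x (Y x)

/-- Lie derivative `(XV)(x) = DV(x)·X(x)`. -/
def lieD {n : ℕ} (X : (Fin n → ℝ) → (Fin n → ℝ)) (V : (Fin n → ℝ) → ℝ) : (Fin n → ℝ) → ℝ :=
  fun x => fderiv ℝ V x (X x)

/-- Partial derivative in the third coordinate on ℝ³. -/
def d3 (h : (Fin 3 → ℝ) → ℝ) : (Fin 3 → ℝ) → ℝ :=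
  fun x => fderiv ℝ h x (Pi.single 2 1)

/-- Iterated bracket with `Y` on the right: `adR X Y 0 = X`, `adR X Y (k+1) = [adR X Y k, Y]`. -/
def adR {n : ℕ} (X Y : (Fin n → ℝ) → (Fin n → ℝ)) : ℕ → (Fin n → ℝ) → (Fin n → ℝ)
  | 0 => X
  | k + 1 => lieB (adR X Y k) Y

namespace Stmt5Aux

abbrev E3 := Fin 3 → ℝ

lemma e3_eq : (![0,0,1] : Fin 3 → ℝ) = Pi.single 2 1 := by
  funext i; fin_cases i <;> simp

lemma contDiff_d3 {h : E3 → ℝ} (hh : ContDiff ℝ (⊤ : ℕ∞) h) : ContDiff ℝ (⊤ : ℕ∞) (d3 h) :=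
  (hh.fderiv_right (by simp)).clm_apply contDiff_const

lemma d3_sum {ι : Type*} {s : Finset ι} {F : ι → E3 → ℝ} {x : E3}
    (h : ∀ i ∈ s, DifferentiableAt ℝ (F i) x) :
    d3 (fun y => ∑ i ∈ s, F i y) x = ∑ i ∈ s, d3 (F i) x := by
  simp [d3, fderiv_fun_sum h]

lemma d3_const_mul {h : E3 → ℝ} {x : E3} (hh : DifferentiableAt ℝ h x) (c : ℝ) :
    d3 (fun y => c * h y) x = c * d3 h x := by
  simp [d3, fderiv_const_mul hh c]

lemma d3_mul {f g : E3 → ℝ} {x : E3} (hf : DifferentiableAt ℝ f x)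
    (hg : DifferentiableAt ℝ g x) :
    d3 (fun y => f y * g y) x = d3 f x * g x + f x * d3 g x := by
  simp only [d3, fderiv_fun_mul hf hg, ContinuousLinearMap.add_apply,
    ContinuousLinearMap.smul_apply, smul_eq_mul]
  ring

lemma hasFDerivAt_pow2 (m : ℕ) (x : E3) :
    HasFDerivAt (fun y : E3 => (y 2)^m)
      (((m : ℝ) * (x 2)^(m-1)) • (ContinuousLinearMap.proj 2 : E3 →L[ℝ] ℝ)) x :=
  (hasDerivAt_pow m (x 2)).comp_hasFDerivAt x (hasFDerivAt_apply (𝕜 := ℝ) 2 x)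

lemma d3_pow (m : ℕ) (x : E3) : d3 (fun y => (y 2)^m) x = m * (x 2)^(m-1) := by
  simp [d3, (hasFDerivAt_pow2 m x).fderiv]

lemma d3_coord (x : E3) : d3 (fun y => y 2) x = 1 := by
  simp [d3, (hasFDerivAt_apply (𝕜 := ℝ) (2 : Fin 3) x).fderiv]


/-- iterated third-partials -/
def AA (a : E3 → ℝ) : ℕ → E3 → ℝ
  | 0 => a
  | j+1 => d3 (AA a j)

lemma contDiff_AA {a : E3 → ℝ} (ha : ContDiff ℝ (⊤ : ℕ∞) a) : ∀ j, ContDiff ℝ (⊤ : ℕ∞) (AA a j)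
  | 0 => ha
  | j+1 => contDiff_d3 (contDiff_AA ha j)

lemma diff_AA {a : E3 → ℝ} (ha : ContDiff ℝ (⊤ : ℕ∞) a) (j : ℕ) (x : E3) :
    DifferentiableAt ℝ (AA a j) x :=
  ((contDiff_AA ha j).differentiable (by simp)).differentiableAt

def PP (L : ℕ) (a : E3 → ℝ) (k : ℕ) : E3 → ℝ := fun x =>
  ∑ j ∈ Finset.range (k+1),
    (k.choose j : ℝ) * (L.descFactorial j : ℝ) * AA a (k-j) x * (x 2)^(L-j)

def QQ (b : E3 → ℝ) (k : ℕ) : E3 → ℝ := fun x =>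
  AA b k x * x 2 + (k : ℝ) * AA b (k-1) x

lemma contDiff_coord : ContDiff ℝ (⊤ : ℕ∞) (fun x : E3 => x 2) :=
  (ContinuousLinearMap.proj 2 : E3 →L[ℝ] ℝ).contDiff

lemma contDiff_PP {a : E3 → ℝ} (ha : ContDiff ℝ (⊤ : ℕ∞) a) (L k : ℕ) :
    ContDiff ℝ (⊤ : ℕ∞) (PP L a k) := by
  apply ContDiff.sum
  intro j _
  exact ((contDiff_const.mul (contDiff_AA ha (k-j))).mul (contDiff_coord.pow (L-j)))

lemma contDiff_QQ {b : E3 → ℝ} (hb : ContDiff ℝ (⊤ : ℕ∞) b) (k : ℕ) :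
    ContDiff ℝ (⊤ : ℕ∞) (QQ b k) :=
  ((contDiff_AA hb k).mul contDiff_coord).add (contDiff_const.mul (contDiff_AA hb (k-1)))

/-- d3 of a term  c * A x * (x 2)^m -/
lemma d3_term {h : E3 → ℝ} (hh : ContDiff ℝ (⊤ : ℕ∞) h) (c : ℝ) (m : ℕ) (x : E3) :
    d3 (fun y => c * h y * (y 2)^m) x
      = c * d3 h x * (x 2)^m + c * h x * ((m : ℝ) * (x 2)^(m-1)) := by
  have h1 : DifferentiableAt ℝ (fun y : E3 => c * h y) x :=
    (((hh.differentiable (by simp)).differentiableAt).const_mul c)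
  have h2 : DifferentiableAt ℝ (fun y : E3 => (y 2)^m) x :=
    (hasFDerivAt_pow2 m x).differentiableAt
  have := d3_mul (f := fun y : E3 => c * h y) (g := fun y : E3 => (y 2)^m) h1 h2
  rw [this, d3_const_mul ((hh.differentiable (by simp)).differentiableAt) c, d3_pow]

lemma AA_succ (a : E3 → ℝ) (n : ℕ) : AA a (n+1) = d3 (AA a n) := rfl

def gterm (L : ℕ) (a : E3 → ℝ) (k : ℕ) (x : E3) (j : ℕ) : ℝ :=
  (k.choose j : ℝ) * (L.descFactorial j : ℝ) * AA a (k+1-j) x * (x 2)^(L-j)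

def bterm (L : ℕ) (a : E3 → ℝ) (k : ℕ) (x : E3) (j : ℕ) : ℝ :=
  (k.choose j : ℝ) * (L.descFactorial (j+1) : ℝ) * AA a (k-j) x * (x 2)^(L-(j+1))

lemma d3_PP {a : E3 → ℝ} (ha : ContDiff ℝ (⊤ : ℕ∞) a) (L k : ℕ) (x : E3) :
    d3 (PP L a k) x = PP L a (k+1) x := by
  have hsum : d3 (PP L a k) x = ∑ j ∈ Finset.range (k+1),
      d3 (fun y => (k.choose j : ℝ) * (L.descFactorial j : ℝ) * AA a (k-j) y * (y 2)^(L-j)) x :=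
    d3_sum (fun j _ =>
      (((diff_AA ha (k-j) x).const_mul _).mul (hasFDerivAt_pow2 (L-j) x).differentiableAt))
  have step1 : d3 (PP L a k) x
      = ∑ j ∈ Finset.range (k+1), (gterm L a k x j + bterm L a k x j) := by
    rw [hsum]
    refine Finset.sum_congr rfl (fun j hj => ?_)
    have hj' : j ≤ k := Nat.lt_succ_iff.mp (Finset.mem_range.mp hj)
    have e1 : k + 1 - j = (k - j) + 1 := by omega
    have e2 : L - j - 1 = L - (j+1) := by omega
    rw [d3_term (contDiff_AA ha (k-j)) _ _ x, gterm, bterm, e1, AA_succ, e2,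
      Nat.descFactorial_succ, Nat.cast_mul]
    ring
  have hRHS : PP L a (k+1) x
      = (∑ j ∈ Finset.range (k+1), bterm L a k x j)
        + ((∑ j ∈ Finset.range (k+1), gterm L a k x (j+1)) + gterm L a k x 0) := by
    show (∑ j ∈ Finset.range (k+1+1),
        (((k+1).choose j : ℝ) * (L.descFactorial j : ℝ) * AA a (k+1-j) x * (x 2)^(L-j))) = _
    rw [Finset.sum_range_succ']
    have hterm : ∀ j ∈ Finset.range (k+1),
        (((k+1).choose (j+1) : ℝ) * (L.descFactorial (j+1) : ℝ) * AA a (k+1-(j+1)) x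
          * (x 2)^(L-(j+1)))
        = bterm L a k x j + gterm L a k x (j+1) := by
      intro j hj
      have e3 : k + 1 - (j+1) = k - j := by omega
      rw [e3, Nat.choose_succ_succ, bterm, gterm, e3, Nat.cast_add]
      ring
    rw [Finset.sum_congr rfl hterm, Finset.sum_add_distrib]
    have h0 : (((k+1).choose 0 : ℝ) * (L.descFactorial 0 : ℝ) * AA a (k+1-0) x * (x 2)^(L-0))
        = gterm L a k x 0 := by
      rw [gterm]; norm_num
    rw [h0, add_assoc]
  have hg2 : (∑ j ∈ Finset.range (k+1), gterm L a k x (j+1)) + gterm L a k x 0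
      = ∑ j ∈ Finset.range (k+1), gterm L a k x j := by
    rw [← Finset.sum_range_succ', Finset.sum_range_succ]
    have : gterm L a k x (k+1) = 0 := by
      rw [gterm, Nat.choose_succ_self]; norm_num
    rw [this, add_zero]
  rw [step1, Finset.sum_add_distrib, hRHS, hg2, add_comm]

lemma d3_QQ {b : E3 → ℝ} (hb : ContDiff ℝ (⊤ : ℕ∞) b) (k : ℕ) (x : E3) :
    d3 (QQ b k) x = QQ b (k+1) x := by
  have h1 : DifferentiableAt ℝ (fun y : E3 => AA b k y * y 2) x :=
    (diff_AA hb k x).mul (hasFDerivAt_apply (𝕜 := ℝ) (2 : Fin 3) x).differentiableAt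
  have h2 : DifferentiableAt ℝ (fun y : E3 => (k : ℝ) * AA b (k-1) y) x :=
    (diff_AA hb (k-1) x).const_mul _
  have hadd : d3 (QQ b k) x
      = d3 (fun y : E3 => AA b k y * y 2) x + d3 (fun y : E3 => (k : ℝ) * AA b (k-1) y) x := by
    show fderiv ℝ (fun y : E3 => AA b k y * y 2 + (k : ℝ) * AA b (k-1) y) x (Pi.single 2 1) = _
    rw [fderiv_fun_add h1 h2]
    rfl
  rw [hadd, d3_mul (diff_AA hb k x) (hasFDerivAt_apply (𝕜 := ℝ) (2 : Fin 3) x).differentiableAt,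
    d3_coord, d3_const_mul (diff_AA hb (k-1) x)]
  show AA b (k+1) x * x 2 + AA b k x * 1 + (k : ℝ) * AA b ((k-1)+1) x
      = AA b (k+1) x * x 2 + (((k+1 : ℕ)) : ℝ) * AA b ((k+1)-1) x
  match k with
  | 0 => push_cast; ring
  | n+1 => push_cast; ring


lemma lieB_formula {u v : E3 → ℝ} (hu : ContDiff ℝ (⊤ : ℕ∞) u) (hv : ContDiff ℝ (⊤ : ℕ∞) v) :
    lieB (fun x => ![u x, v x, 0]) (fun _ => ![0,0,1])
      = fun x => ![-(d3 u x), -(d3 v x), 0] := by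
  funext x
  have hF : HasFDerivAt (fun x : E3 => ![u x, v x, 0])
      (ContinuousLinearMap.pi ![fderiv ℝ u x, fderiv ℝ v x, 0]) x := by
    rw [hasFDerivAt_pi']
    intro i
    rw [ContinuousLinearMap.proj_pi]
    fin_cases i
    · simpa using ((hu.differentiable (by simp)) x).hasFDerivAt
    · simpa using ((hv.differentiable (by simp)) x).hasFDerivAt
    · simpa using hasFDerivAt_const (0 : ℝ) x
  show fderiv ℝ (fun _ : E3 => (![0,0,1] : Fin 3 → ℝ)) x _ - fderiv ℝ _ x _ = _
  rw [fderiv_const_apply, hF.fderiv]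
  funext i
  fin_cases i <;>
    simp [d3, e3_eq, ContinuousLinearMap.pi_apply]


lemma adR_formula (L : ℕ) {a b : E3 → ℝ} (ha : ContDiff ℝ (⊤ : ℕ∞) a) (hb : ContDiff ℝ (⊤ : ℕ∞) b) :
    ∀ k, adR (fun x : E3 => ![a x * x 2 ^ L, b x * x 2, 0]) (fun _ => ![0,0,1]) k
      = fun x => ![(-1:ℝ)^k * PP L a k x, (-1:ℝ)^k * QQ b k x, 0]
  | 0 => by
      funext x
      simp [adR, PP, QQ, AA, Finset.sum_range_one]
  | k+1 => by
      rw [show adR (fun x : E3 => ![a x * x 2 ^ L, b x * x 2, 0]) (fun _ => ![0,0,1]) (k+1)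
          = lieB (adR (fun x : E3 => ![a x * x 2 ^ L, b x * x 2, 0])
              (fun _ => ![0,0,1]) k) (fun _ => ![0,0,1]) from rfl,
        adR_formula L ha hb k,
        lieB_formula (contDiff_const.mul (contDiff_PP ha L k))
          (contDiff_const.mul (contDiff_QQ hb k))]
      funext x
      have hP : d3 (fun y => (-1:ℝ)^k * PP L a k y) x = (-1:ℝ)^k * PP L a (k+1) x := by
        rw [d3_const_mul (((contDiff_PP ha L k).differentiable (by simp)) x), d3_PP ha]
      have hQ : d3 (fun y => (-1:ℝ)^k * QQ b k y) x = (-1:ℝ)^k * QQ b (k+1) x := by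
        rw [d3_const_mul (((contDiff_QQ hb k).differentiable (by simp)) x), d3_QQ hb]
      rw [hP, hQ]
      funext i
      fin_cases i <;> simp [pow_succ]

end Stmt5Aux


open Stmt5Aux in
theorem stmt5 (L : ℕ) (hL : 3 ≤ L) (hodd : Odd L)
    (a b : (Fin 3 → ℝ) → ℝ) (ha : ContDiff ℝ (⊤ : ℕ∞) a) (hb : ContDiff ℝ (⊤ : ℕ∞) b)
    (ha0 : ∀ x, a x ≠ 0)
    (f g : (Fin 3 → ℝ) → (Fin 3 → ℝ))
    (hf : f = fun x => ![a x * x 2 ^ L, b x * x 2, 0])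
    (hg : g = fun _ => ![0, 0, 1])
    (V : (Fin 3 → ℝ) → ℝ)
    (hV : V = fun x => x 0 ^ 2 / 2 + x 1 ^ (L + 1) / ((L : ℝ) + 1) + x 2 ^ 2 / 2) :
    ∀ x₁ : ℝ, x₁ ≠ 0 →
      lieD (adR f g L) V ![x₁, 0, 0] =
        (-1 : ℝ) ^ L * (Nat.factorial L : ℝ) * a ![x₁, 0, 0] * x₁ ∧
      lieD (adR f g L) V ![x₁, 0, 0] ≠ 0 := by
  intro x₁ hx₁
  set pt : Fin 3 → ℝ := ![x₁, 0, 0] with hpt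
  have hpt0 : pt 0 = x₁ := rfl
  have hpt1 : pt 1 = 0 := rfl
  have hpt2 : pt 2 = 0 := rfl
  have hL1 : L ≠ 0 := by omega
  -- the bracket formula
  have key : adR f g L = fun x => ![(-1:ℝ)^L * PP L a L x, (-1:ℝ)^L * QQ b L x, 0] := by
    rw [hf, hg]; exact adR_formula L ha hb L
  -- the derivative of V at pt
  have h0 : HasFDerivAt (fun x : Fin 3 → ℝ => x 0 ^ 2 / 2)
      (((2 * pt 0 ^ (2-1)) / 2) • (ContinuousLinearMap.proj 0 : (Fin 3 → ℝ) →L[ℝ] ℝ)) pt :=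
    by have := (((hasDerivAt_pow 2 (pt 0)).div_const 2).comp_hasFDerivAt pt
      (hasFDerivAt_apply (𝕜 := ℝ) 0 pt)); exact this
  have h1 : HasFDerivAt (fun x : Fin 3 → ℝ => x 1 ^ (L+1) / ((L : ℝ) + 1))
      ((((L+1 : ℕ) * pt 1 ^ (L+1-1)) / ((L : ℝ) + 1)) •
        (ContinuousLinearMap.proj 1 : (Fin 3 → ℝ) →L[ℝ] ℝ)) pt :=
    by have := (((hasDerivAt_pow (L+1) (pt 1)).div_const ((L : ℝ) + 1)).comp_hasFDerivAt pt
      (hasFDerivAt_apply (𝕜 := ℝ) 1 pt)); exact this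
  have h2 : HasFDerivAt (fun x : Fin 3 → ℝ => x 2 ^ 2 / 2)
      (((2 * pt 2 ^ (2-1)) / 2) • (ContinuousLinearMap.proj 2 : (Fin 3 → ℝ) →L[ℝ] ℝ)) pt :=
    by have := (((hasDerivAt_pow 2 (pt 2)).div_const 2).comp_hasFDerivAt pt
      (hasFDerivAt_apply (𝕜 := ℝ) 2 pt)); exact this
  have hVd : HasFDerivAt V
      ((((2 * pt 0 ^ (2-1)) / 2) • (ContinuousLinearMap.proj 0 : (Fin 3 → ℝ) →L[ℝ] ℝ)
        + ((((L+1 : ℕ) : ℝ) * pt 1 ^ (L+1-1)) / ((L : ℝ) + 1)) •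
            (ContinuousLinearMap.proj 1 : (Fin 3 → ℝ) →L[ℝ] ℝ))
        + ((2 * pt 2 ^ (2-1)) / 2) • (ContinuousLinearMap.proj 2 : (Fin 3 → ℝ) →L[ℝ] ℝ)) pt := by
    rw [hV]; exact (h0.add h1).add h2
  -- evaluate PP at the point
  have hPP : PP L a L pt = (Nat.factorial L : ℝ) * a pt := by
    show (∑ j ∈ Finset.range (L+1),
      (L.choose j : ℝ) * (L.descFactorial j : ℝ) * AA a (L-j) pt * (pt 2)^(L-j)) = _
    rw [Finset.sum_range_succ]
    have hz : ∀ j ∈ Finset.range L,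
        (L.choose j : ℝ) * (L.descFactorial j : ℝ) * AA a (L-j) pt * (pt 2)^(L-j) = 0 := by
      intro j hj
      have : L - j ≠ 0 := by have := Finset.mem_range.mp hj; omega
      rw [hpt2, zero_pow this, mul_zero]
    rw [Finset.sum_eq_zero hz, zero_add, Nat.choose_self, Nat.descFactorial_self,
      Nat.sub_self, hpt2]
    show (1 : ℕ) * (Nat.factorial L : ℝ) * AA a 0 pt * (1:ℝ) = _
    rw [AA]
    push_cast
    ring
  -- evaluate the Lie derivative
  have hval : lieD (adR f g L) V pt = (-1:ℝ)^L * (Nat.factorial L : ℝ) * a pt * x₁ := by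
    show fderiv ℝ V pt (adR f g L pt) = _
    rw [hVd.fderiv, key]
    simp only [ContinuousLinearMap.add_apply, ContinuousLinearMap.smul_apply,
      ContinuousLinearMap.proj_apply, smul_eq_mul, Matrix.cons_val_zero, Matrix.cons_val_one,
      Matrix.head_cons, Matrix.cons_val_two, Matrix.tail_cons]
    rw [hpt0, hpt1, hpt2, hPP, Nat.add_sub_cancel, zero_pow hL1]
    ring
  exact ⟨hval, by
    rw [hval]
    exact mul_ne_zero (mul_ne_zero (mul_ne_zero (pow_ne_zero _ (by norm_num))
      (Nat.cast_ne_zero.mpr L.factorial_ne_zero)) (ha0 pt)) hx₁⟩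
end
end

section
/- Let L ≥ 3 be odd, f(x) = (a(x)x₃^L, b(x)x₃, 0), g = (0,0,1), V(x) = ½x₁² + x₂^{L+1}/(L+1) + ½x₃², with a, b smooth. Then at points x = (x₁, 0, 0), for every k with 1 ≤ k ≤ L−1, the k-fold iterated bracket satisfies ([...[[f,g],g],...,g]V)(x) = 0 (with g appearing k times). -/
noncomputable section

open Set

lemma single_two : (Pi.single 2 1 : Fin 3 → ℝ) = ![0, 0, 1] := by
  funext i
  fin_cases i <;> simp [Pi.single_apply]

lemma d3_contDiff {u : (Fin 3 → ℝ) → ℝ} (hu : ContDiff ℝ (⊤ : ℕ∞) u) : ContDiff ℝ (⊤ : ℕ∞) (d3 u) := by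
  have : ContDiff ℝ (⊤ : ℕ∞) (fderiv ℝ u) := hu.fderiv_right (by simp)
  exact this.clm_apply contDiff_const

lemma proj_contDiff : ContDiff ℝ (⊤ : ℕ∞) (fun x : Fin 3 → ℝ => x 2) :=
  (ContinuousLinearMap.proj (R := ℝ) (φ := fun _ : Fin 3 => ℝ) 2).contDiff

lemma d3_mul_pow {u : (Fin 3 → ℝ) → ℝ} (hu : Differentiable ℝ u) (m : ℕ) (x : Fin 3 → ℝ) :
    d3 (fun x => u x * x 2 ^ m) x
      = u x * ((m : ℝ) * x 2 ^ (m - 1)) + x 2 ^ m * d3 u x := by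
  have h1 : HasFDerivAt (fun x : Fin 3 → ℝ => x 2 ^ m)
      (((m : ℝ) * x 2 ^ (m - 1)) •
        (ContinuousLinearMap.proj (R := ℝ) (φ := fun _ : Fin 3 => ℝ) 2)) x :=
    (hasDerivAt_pow m (x 2)).comp_hasFDerivAt x
      (ContinuousLinearMap.proj (R := ℝ) (φ := fun _ : Fin 3 => ℝ) 2).hasFDerivAt
  have h2 : HasFDerivAt (fun x => u x * x 2 ^ m) _ x := (hu x).hasFDerivAt.mul h1
  simp only [d3, h2.fderiv]
  simp [smul_eq_mul, mul_comm]

lemma bracket_step {X g : (Fin 3 → ℝ) → (Fin 3 → ℝ)} {p q : (Fin 3 → ℝ) → ℝ}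
    (hp : Differentiable ℝ p) (hq : Differentiable ℝ q)
    (hX : X = fun x => ![p x, q x, 0]) (hg : g = fun _ => ![0, 0, 1]) :
    lieB X g = fun x => ![-(d3 p x), -(d3 q x), 0] := by
  funext x
  have hXpi : X = fun x i => (![p, q, fun _ => 0] : Fin 3 → (Fin 3 → ℝ) → ℝ) i x := by
    funext y i
    fin_cases i <;> simp [hX]
  have hdiff : ∀ i : Fin 3,
      DifferentiableAt ℝ ((![p, q, fun _ => 0] : Fin 3 → (Fin 3 → ℝ) → ℝ) i) x := by
    intro i
    fin_cases i
    · exact hp x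
    · exact hq x
    · exact (differentiable_const (0 : ℝ)) x
  have hfd : fderiv ℝ X x = ContinuousLinearMap.pi
      (fun i => fderiv ℝ ((![p, q, fun _ => 0] : Fin 3 → (Fin 3 → ℝ) → ℝ) i) x) := by
    rw [hXpi]
    exact fderiv_pi hdiff
  have hgconst : fderiv ℝ g x = 0 := by rw [hg]; exact fderiv_const_apply _
  have hgx : g x = Pi.single 2 1 := by rw [hg, single_two]
  rw [lieB, hgconst, hgx, hfd]
  funext i
  fin_cases i <;>
    simp [ContinuousLinearMap.pi_apply, d3, Matrix.cons_val_zero, Matrix.cons_val_one]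

theorem stmt6 (L : ℕ) (hL : 3 ≤ L) (hodd : Odd L)
    (a b : (Fin 3 → ℝ) → ℝ) (ha : ContDiff ℝ (⊤ : ℕ∞) a) (hb : ContDiff ℝ (⊤ : ℕ∞) b)
    (f g : (Fin 3 → ℝ) → (Fin 3 → ℝ))
    (hf : f = fun x => ![a x * x 2 ^ L, b x * x 2, 0])
    (hg : g = fun _ => ![0, 0, 1])
    (V : (Fin 3 → ℝ) → ℝ)
    (hV : V = fun x => x 0 ^ 2 / 2 + x 1 ^ (L + 1) / ((L : ℝ) + 1) + x 2 ^ 2 / 2) :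
    ∀ x₁ : ℝ, ∀ k : ℕ, 1 ≤ k → k ≤ L - 1 →
      lieD (adR f g k) V ![x₁, 0, 0] = 0 := by
  -- main structural lemma
  have main : ∀ k : ℕ, k ≤ L - 1 →
      ∃ u v : (Fin 3 → ℝ) → ℝ, ContDiff ℝ (⊤ : ℕ∞) u ∧ ContDiff ℝ (⊤ : ℕ∞) v ∧
        adR f g k = fun x => ![u x * x 2 ^ (L - k), v x, 0] := by
    intro k
    induction k with
    | zero =>
      intro _
      refine ⟨a, fun x => b x * x 2, ha, hb.mul proj_contDiff, ?_⟩
      simp [adR, hf]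
    | succ k ih =>
      intro hk1
      have hk : k ≤ L - 1 := Nat.le_of_succ_le hk1
      obtain ⟨u, v, hu, hv, hEq⟩ := ih hk
      have hm : 1 ≤ L - k := by omega
      have hp : Differentiable ℝ (fun x : Fin 3 → ℝ => u x * x 2 ^ (L - k)) :=
        (hu.differentiable (by simp)).mul ((proj_contDiff.differentiable (by simp)).pow _)
      have hstep := bracket_step hp (hv.differentiable (by simp)) hEq hg
      refine ⟨fun x => -(u x * ((L - k : ℕ) : ℝ) + x 2 * d3 u x), fun x => -(d3 v x), ?_, ?_, ?_⟩
      · exact ((hu.mul contDiff_const).add (proj_contDiff.mul (d3_contDiff hu))).neg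
      · exact (d3_contDiff hv).neg
      · show lieB (adR f g k) g = _
        rw [hEq] at hstep ⊢
        rw [hstep]
        funext x
        congr 1
        rw [d3_mul_pow (hu.differentiable (by simp))]
        have hpow : x 2 ^ (L - k) = x 2 * x 2 ^ (L - k - 1) := by
          conv_lhs => rw [show L - k = (L - k - 1) + 1 by omega]
          ring
        have hLk : L - (k + 1) = L - k - 1 := by omega
        rw [hLk, hpow]
        ring
  intro x₁ k hk1 hk2
  obtain ⟨u, v, hu, hv, hEq⟩ := main k hk2
  -- the point
  set p : Fin 3 → ℝ := ![x₁, 0, 0] with hp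
  have hp2 : p 2 = 0 := by simp [hp]
  have hp1 : p 1 = 0 := by simp [hp]
  have hp0 : p 0 = x₁ := by simp [hp]
  have hLk : L - k ≠ 0 := by omega
  have hw : adR f g k p = ![0, v p, 0] := by
    rw [hEq]
    simp [hp2, zero_pow hLk]
  -- derivative of V
  have hVd : HasFDerivAt V
      (((2 : ℝ) * p 0 ^ 1 / 2) • (ContinuousLinearMap.proj (R := ℝ) (φ := fun _ : Fin 3 => ℝ) 0)
        + ((((L : ℝ) + 1) * p 1 ^ L / ((L : ℝ) + 1)) •
            (ContinuousLinearMap.proj (R := ℝ) (φ := fun _ : Fin 3 => ℝ) 1))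
        + ((2 : ℝ) * p 2 ^ 1 / 2) •
            (ContinuousLinearMap.proj (R := ℝ) (φ := fun _ : Fin 3 => ℝ) 2)) p := by
    rw [hV]
    have h0 : HasFDerivAt (fun x : Fin 3 → ℝ => x 0 ^ 2 / 2)
        (((2 : ℝ) * p 0 ^ 1 / 2) •
          (ContinuousLinearMap.proj (R := ℝ) (φ := fun _ : Fin 3 => ℝ) 0)) p := by
      have := ((hasDerivAt_pow 2 (p 0)).div_const 2).comp_hasFDerivAt p
        (ContinuousLinearMap.proj (R := ℝ) (φ := fun _ : Fin 3 => ℝ) 0).hasFDerivAt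
      simpa [Function.comp_def] using this
    have h1 : HasFDerivAt (fun x : Fin 3 → ℝ => x 1 ^ (L + 1) / ((L : ℝ) + 1))
        (((((L : ℝ) + 1) * p 1 ^ L / ((L : ℝ) + 1))) •
          (ContinuousLinearMap.proj (R := ℝ) (φ := fun _ : Fin 3 => ℝ) 1)) p := by
      have := ((hasDerivAt_pow (L + 1) (p 1)).div_const ((L : ℝ) + 1)).comp_hasFDerivAt p
        (ContinuousLinearMap.proj (R := ℝ) (φ := fun _ : Fin 3 => ℝ) 1).hasFDerivAt
      simpa [Function.comp_def] using this
    have h2 : HasFDerivAt (fun x : Fin 3 → ℝ => x 2 ^ 2 / 2)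
        (((2 : ℝ) * p 2 ^ 1 / 2) •
          (ContinuousLinearMap.proj (R := ℝ) (φ := fun _ : Fin 3 => ℝ) 2)) p := by
      have := ((hasDerivAt_pow 2 (p 2)).div_const 2).comp_hasFDerivAt p
        (ContinuousLinearMap.proj (R := ℝ) (φ := fun _ : Fin 3 => ℝ) 2).hasFDerivAt
      simpa [Function.comp_def] using this
    exact (h0.add h1).add h2
  rw [lieD, hVd.fderiv, hw]
  have hL0 : L ≠ 0 := by omega
  simp [hp0, hp1, hp2, zero_pow hL0]
end
end

section
/- Let f(x) = (a(x)x₃^L, b(x)x₃, 0) and g = (0,0,1) on ℝ³ with a, b smooth and a(x) ≠ 0, b(x) ≠ 0 for all x, L ≥ 3 odd, V(x) = ½x₁² + x₂^{L+1}/(L+1) + ½x₃². Then for every x ≠ 0 with (gV)(x) = 0 (i.e., x₃ = 0): either x₂ ≠ 0, in which case (f^iV)(x) = 0 for all i ≥ 1 and ([f,g]V)(x) ≠ 0; or x₂ = 0 (so x₁ ≠ 0), in which case (f^iV)(x) = 0 for all i ≥ 1, (ad_g^k f · V)(x) = 0 for k = 1,…,L−1, and (ad_g^L f · V)(x) ≠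 0. -/
noncomputable section

open Set

lemma vec_e3 : (![0,0,1] : Fin 3 → ℝ) = Pi.single 2 1 := by
  funext i; fin_cases i <;> simp

lemma d3_smooth {h : (Fin 3 → ℝ) → ℝ} (hh : ContDiff ℝ (⊤ : ℕ∞) h) : ContDiff ℝ (⊤ : ℕ∞) (d3 h) := by
  exact (hh.fderiv_right (m := (⊤ : ℕ∞)) (by simp)).clm_apply contDiff_const

lemma d3_iter_smooth {h : (Fin 3 → ℝ) → ℝ} (hh : ContDiff ℝ (⊤ : ℕ∞) h) (k : ℕ) :
    ContDiff ℝ (⊤ : ℕ∞) (d3^[k] h) := by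
  induction k with
  | zero => exact hh
  | succ k ih => rw [Function.iterate_succ_apply']; exact d3_smooth ih

lemma d3_const_mul {h : (Fin 3 → ℝ) → ℝ} {x : Fin 3 → ℝ} (hh : DifferentiableAt ℝ h x)
    (c : ℝ) : d3 (fun y => c * h y) x = c * d3 h x := by
  unfold d3; rw [fderiv_const_mul hh]; simp

lemma d3_mul {u v : (Fin 3 → ℝ) → ℝ} {x : Fin 3 → ℝ} (hu : DifferentiableAt ℝ u x)
    (hv : DifferentiableAt ℝ v x) :
    d3 (fun y => u y * v y) x = d3 u x * v x + u x * d3 v x := by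
  unfold d3; rw [fderiv_fun_mul hu hv]; simp; ring

lemma hasFDerivAt_coord_pow (i : Fin 3) (n : ℕ) (x : Fin 3 → ℝ) :
    HasFDerivAt (fun y : Fin 3 → ℝ => y i ^ n)
      (((n : ℝ) * x i ^ (n - 1)) • (ContinuousLinearMap.proj i : (Fin 3 → ℝ) →L[ℝ] ℝ)) x := by
  have h1 : HasFDerivAt (fun y : Fin 3 → ℝ => y i)
      (ContinuousLinearMap.proj i : (Fin 3 → ℝ) →L[ℝ] ℝ) x :=
    (ContinuousLinearMap.proj i : (Fin 3 → ℝ) →L[ℝ] ℝ).hasFDerivAt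
  exact HasDerivAt.comp_hasFDerivAt (𝕜 := ℝ) x (hasDerivAt_pow n (x i)) h1

lemma diff_coord_pow (i : Fin 3) (n : ℕ) (x : Fin 3 → ℝ) :
    DifferentiableAt ℝ (fun y : Fin 3 → ℝ => y i ^ n) x :=
  (hasFDerivAt_coord_pow i n x).differentiableAt

lemma d3_coord_pow (n : ℕ) (x : Fin 3 → ℝ) :
    d3 (fun y => y 2 ^ n) x = n * x 2 ^ (n - 1) := by
  unfold d3
  rw [(hasFDerivAt_coord_pow 2 n x).fderiv]
  simp

lemma smooth_coord (i : Fin 3) : ContDiff ℝ (⊤ : ℕ∞) (fun y : Fin 3 → ℝ => y i) :=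
  (ContinuousLinearMap.proj i : (Fin 3 → ℝ) →L[ℝ] ℝ).contDiff

lemma fderiv_V_apply (L : ℕ) (x v : Fin 3 → ℝ) :
    fderiv ℝ (fun y : Fin 3 → ℝ => y 0 ^ 2 / 2 + y 1 ^ (L + 1) / ((L : ℝ) + 1) + y 2 ^ 2 / 2) x v
      = x 0 * v 0 + x 1 ^ L * v 1 + x 2 * v 2 := by
  have p0 : HasFDerivAt (fun y : Fin 3 → ℝ => y 0)
      (ContinuousLinearMap.proj 0 : (Fin 3 → ℝ) →L[ℝ] ℝ) x :=
    (ContinuousLinearMap.proj 0 : (Fin 3 → ℝ) →L[ℝ] ℝ).hasFDerivAt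
  have p1 : HasFDerivAt (fun y : Fin 3 → ℝ => y 1)
      (ContinuousLinearMap.proj 1 : (Fin 3 → ℝ) →L[ℝ] ℝ) x :=
    (ContinuousLinearMap.proj 1 : (Fin 3 → ℝ) →L[ℝ] ℝ).hasFDerivAt
  have p2 : HasFDerivAt (fun y : Fin 3 → ℝ => y 2)
      (ContinuousLinearMap.proj 2 : (Fin 3 → ℝ) →L[ℝ] ℝ) x :=
    (ContinuousLinearMap.proj 2 : (Fin 3 → ℝ) →L[ℝ] ℝ).hasFDerivAt
  have h0 : HasFDerivAt (fun y : Fin 3 → ℝ => y 0 ^ 2 / 2)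
      (((2 : ℝ) * x 0 ^ (2 - 1) / 2) • (ContinuousLinearMap.proj 0 : (Fin 3 → ℝ) →L[ℝ] ℝ)) x := by
    simpa [Function.comp_def] using HasDerivAt.comp_hasFDerivAt (𝕜 := ℝ) x ((hasDerivAt_pow 2 (x 0)).div_const 2) p0
  have h1 : HasFDerivAt (fun y : Fin 3 → ℝ => y 1 ^ (L + 1) / ((L : ℝ) + 1))
      ((((L : ℝ) + 1) * x 1 ^ (L + 1 - 1) / ((L : ℝ) + 1)) •
        (ContinuousLinearMap.proj 1 : (Fin 3 → ℝ) →L[ℝ] ℝ)) x := by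
    have := HasDerivAt.comp_hasFDerivAt (𝕜 := ℝ) x
      ((hasDerivAt_pow (L + 1) (x 1)).div_const ((L : ℝ) + 1)) p1
    simpa [Function.comp_def] using this
  have h2 : HasFDerivAt (fun y : Fin 3 → ℝ => y 2 ^ 2 / 2)
      (((2 : ℝ) * x 2 ^ (2 - 1) / 2) • (ContinuousLinearMap.proj 2 : (Fin 3 → ℝ) →L[ℝ] ℝ)) x := by
    simpa [Function.comp_def] using HasDerivAt.comp_hasFDerivAt (𝕜 := ℝ) x ((hasDerivAt_pow 2 (x 2)).div_const 2) p2
  have H : HasFDerivAt (fun y : Fin 3 → ℝ => y 0 ^ 2 / 2 + y 1 ^ (L + 1) / ((L : ℝ) + 1) + y 2 ^ 2 / 2) _ x :=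
    (h0.add h1).add h2
  rw [H.fderiv]
  have hL1 : ((L : ℝ) + 1) ≠ 0 := by positivity
  simp only [ContinuousLinearMap.add_apply, ContinuousLinearMap.smul_apply,
    ContinuousLinearMap.proj_apply, smul_eq_mul, Nat.add_sub_cancel]
  field_simp
  simp only [show (2:ℕ) - 1 = 1 from rfl, pow_one]; ring


lemma adR_closed (L : ℕ) (a b : (Fin 3 → ℝ) → ℝ) (ha : ContDiff ℝ (⊤ : ℕ∞) a) (hb : ContDiff ℝ (⊤ : ℕ∞) b)
    (f g : (Fin 3 → ℝ) → (Fin 3 → ℝ))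
    (hf : f = fun x => ![a x * x 2 ^ L, b x * x 2, 0])
    (hg : g = fun _ => ![0, 0, 1]) (k : ℕ) :
    adR f g k = fun x =>
      ((-1 : ℝ) ^ k * d3^[k] (fun y => a y * y 2 ^ L) x) • (Pi.single 0 1 : Fin 3 → ℝ)
      + ((-1 : ℝ) ^ k * d3^[k] (fun y => b y * y 2) x) • (Pi.single 1 1 : Fin 3 → ℝ) := by
  set A : (Fin 3 → ℝ) → ℝ := fun y => a y * y 2 ^ L with hA
  set B : (Fin 3 → ℝ) → ℝ := fun y => b y * y 2 with hB
  have hAs : ContDiff ℝ (⊤ : ℕ∞) A := ha.mul ((smooth_coord 2).pow L)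
  have hBs : ContDiff ℝ (⊤ : ℕ∞) B := hb.mul (smooth_coord 2)
  induction k with
  | zero =>
    show f = _
    rw [hf]
    funext x
    funext i
    fin_cases i <;> simp [A, B]
  | succ k ih =>
    show lieB (adR f g k) g = _
    funext x
    unfold lieB
    rw [ih]
    have hgd : fderiv ℝ g x = 0 := by rw [hg]; exact fderiv_const_apply _
    have hgx : g x = Pi.single 2 1 := by rw [hg]; exact vec_e3
    have dA : Differentiable ℝ (fun y => (-1 : ℝ) ^ k * d3^[k] A y) :=
      (contDiff_const.mul (d3_iter_smooth hAs k)).differentiable (by simp)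
    have dB : Differentiable ℝ (fun y => (-1 : ℝ) ^ k * d3^[k] B y) :=
      (contDiff_const.mul (d3_iter_smooth hBs k)).differentiable (by simp)
    have H : HasFDerivAt (fun y =>
        ((-1 : ℝ) ^ k * d3^[k] A y) • (Pi.single 0 1 : Fin 3 → ℝ)
        + ((-1 : ℝ) ^ k * d3^[k] B y) • (Pi.single 1 1 : Fin 3 → ℝ))
        ((fderiv ℝ (fun y => (-1 : ℝ) ^ k * d3^[k] A y) x).smulRight (Pi.single 0 1)
          + (fderiv ℝ (fun y => (-1 : ℝ) ^ k * d3^[k] B y) x).smulRight (Pi.single 1 1)) x :=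
      (((dA x).hasFDerivAt).smul_const _).add (((dB x).hasFDerivAt).smul_const _)
    rw [hgd, hgx, H.fderiv]
    have e1 : fderiv ℝ (fun y => (-1 : ℝ) ^ k * d3^[k] A y) x (Pi.single 2 1)
        = (-1 : ℝ) ^ k * d3^[k+1] A x := by
      rw [Function.iterate_succ_apply']
      exact d3_const_mul ((d3_iter_smooth hAs k).differentiable (by simp) x) _
    have e2 : fderiv ℝ (fun y => (-1 : ℝ) ^ k * d3^[k] B y) x (Pi.single 2 1)
        = (-1 : ℝ) ^ k * d3^[k+1] B x := by
      rw [Function.iterate_succ_apply']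
      exact d3_const_mul ((d3_iter_smooth hBs k).differentiable (by simp) x) _
    simp only [ContinuousLinearMap.zero_apply, ContinuousLinearMap.add_apply,
      ContinuousLinearMap.smulRight_apply, e1, e2, pow_succ]
    module

lemma d3_add {u v : (Fin 3 → ℝ) → ℝ} {x : Fin 3 → ℝ} (hu : DifferentiableAt ℝ u x)
    (hv : DifferentiableAt ℝ v x) :
    d3 (fun y => u y + v y) x = d3 u x + d3 v x := by
  unfold d3; rw [fderiv_fun_add hu hv]; simp

lemma lemA (L : ℕ) (a : (Fin 3 → ℝ) → ℝ) (ha : ContDiff ℝ (⊤ : ℕ∞) a) :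
    ∀ k, k ≤ L → ∃ r : (Fin 3 → ℝ) → ℝ, ContDiff ℝ (⊤ : ℕ∞) r ∧
      ∀ x, d3^[k] (fun y => a y * y 2 ^ L) x
        = (L.descFactorial k : ℝ) * (a x * x 2 ^ (L - k)) + x 2 ^ (L - k + 1) * r x := by
  intro k
  induction k with
  | zero =>
    intro _
    exact ⟨fun _ => 0, contDiff_const, fun x => by simp⟩
  | succ k ih =>
    intro hk1
    obtain ⟨r, hr, hrx⟩ := ih (Nat.le_of_succ_le hk1)
    set m := L - k with hm
    have hm1 : 1 ≤ m := by omega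
    set C : ℝ := (L.descFactorial k : ℝ) with hC
    refine ⟨fun x => C * d3 a x + ((m : ℝ) + 1) * r x + x 2 * d3 r x, ?_, ?_⟩
    · exact ((contDiff_const.mul (d3_smooth ha)).add
        (contDiff_const.mul hr)).add ((smooth_coord 2).mul (d3_smooth hr))
    · intro x
      have hfun : d3^[k] (fun y => a y * y 2 ^ L)
          = fun y => C * (a y * y 2 ^ m) + y 2 ^ (m + 1) * r y := funext hrx
      rw [Function.iterate_succ_apply', hfun]
      have dap : DifferentiableAt ℝ (fun y : Fin 3 → ℝ => a y * y 2 ^ m) x :=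
        ((ha.differentiable (by simp) x).mul (diff_coord_pow 2 m x))
      have d1 : DifferentiableAt ℝ (fun y : Fin 3 → ℝ => C * (a y * y 2 ^ m)) x :=
        dap.const_mul C
      have d2 : DifferentiableAt ℝ (fun y : Fin 3 → ℝ => y 2 ^ (m + 1) * r y) x :=
        (diff_coord_pow 2 (m + 1) x).mul (hr.differentiable (by simp) x)
      rw [d3_add d1 d2, d3_const_mul dap,
        d3_mul (ha.differentiable (by simp) x) (diff_coord_pow 2 m x),
        d3_mul (diff_coord_pow 2 (m + 1) x) (hr.differentiable (by simp) x),
        d3_coord_pow, d3_coord_pow]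
      have e1 : L - (k + 1) = m - 1 := by omega
      have e2 : L - (k + 1) + 1 = m := by omega
      have e3 : m - 1 + 1 = m := by omega
      have e4 : m + 1 - 1 = m := by omega
      have e5 : (L.descFactorial (k + 1) : ℝ) = (m : ℝ) * C := by
        rw [hC, hm, ← Nat.cast_mul, ← Nat.descFactorial_succ]
      have hxpow : x 2 ^ m = x 2 ^ (m - 1) * x 2 := by
        conv_lhs => rw [← e3, pow_succ]
      rw [e1, e3, e5, e4, pow_succ, hxpow]
      push_cast
      ring

lemma diff_coord (i : Fin 3) (x : Fin 3 → ℝ) :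
    DifferentiableAt ℝ (fun y : Fin 3 → ℝ => y i) x :=
  (ContinuousLinearMap.proj i : (Fin 3 → ℝ) →L[ℝ] ℝ).differentiableAt

lemma d3_coord (x : Fin 3 → ℝ) : d3 (fun y : Fin 3 → ℝ => y 2) x = 1 := by
  unfold d3
  have h : HasFDerivAt (fun y : Fin 3 → ℝ => y 2)
      (ContinuousLinearMap.proj 2 : (Fin 3 → ℝ) →L[ℝ] ℝ) x :=
    (ContinuousLinearMap.proj 2 : (Fin 3 → ℝ) →L[ℝ] ℝ).hasFDerivAt
  rw [h.fderiv]
  simp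


theorem stmt14 (L : ℕ) (hL : 3 ≤ L) (hodd : Odd L)
    (a b : (Fin 3 → ℝ) → ℝ) (ha : ContDiff ℝ (⊤ : ℕ∞) a) (hb : ContDiff ℝ (⊤ : ℕ∞) b)
    (ha0 : ∀ x, a x ≠ 0) (hb0 : ∀ x, b x ≠ 0)
    (f g : (Fin 3 → ℝ) → (Fin 3 → ℝ))
    (hf : f = fun x => ![a x * x 2 ^ L, b x * x 2, 0])
    (hg : g = fun _ => ![0, 0, 1])
    (V : (Fin 3 → ℝ) → ℝ)
    (hV : V = fun x => x 0 ^ 2 / 2 + x 1 ^ (L + 1) / ((L : ℝ) + 1) + x 2 ^ 2 / 2) :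
    ∀ x : Fin 3 → ℝ, x ≠ 0 → lieD g V x = 0 →
      x 2 = 0 ∧
      (x 1 ≠ 0 →
        (∀ i : ℕ, 1 ≤ i → (lieD f)^[i] V x = 0) ∧ lieD (lieB f g) V x ≠ 0) ∧
      (x 1 = 0 →
        x 0 ≠ 0 ∧
        (∀ i : ℕ, 1 ≤ i → (lieD f)^[i] V x = 0) ∧
        (∀ k : ℕ, 1 ≤ k → k ≤ L - 1 → lieD (adR f g k) V x = 0) ∧
        lieD (adR f g L) V x ≠ 0) := by
  have hL0 : L ≠ 0 := by omega
  intro x hx hgV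
  have hVap : ∀ v, fderiv ℝ V x v = x 0 * v 0 + x 1 ^ L * v 1 + x 2 * v 2 := by
    intro v; rw [hV]; exact fderiv_V_apply L x v
  have hx2 : x 2 = 0 := by
    unfold lieD at hgV
    rw [hVap, hg] at hgV
    simpa using hgV
  have hfx : f x = 0 := by
    rw [hf]; funext i; fin_cases i <;> simp [hx2, zero_pow hL0]
  have hiter : ∀ i : ℕ, 1 ≤ i → (lieD f)^[i] V x = 0 := by
    intro i hi
    obtain ⟨j, rfl⟩ : ∃ j, i = j + 1 := ⟨i - 1, by omega⟩
    rw [Function.iterate_succ_apply']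
    show fderiv ℝ ((lieD f)^[j] V) x (f x) = 0
    rw [hfx]; simp
  set A : (Fin 3 → ℝ) → ℝ := fun y => a y * y 2 ^ L with hA
  set B : (Fin 3 → ℝ) → ℝ := fun y => b y * y 2 with hB
  have hadR := adR_closed L a b ha hb f g hf hg
  refine ⟨hx2, ?_, ?_⟩
  · -- x 1 ≠ 0 case
    intro hx1
    refine ⟨hiter, ?_⟩
    have h1 : lieB f g = adR f g 1 := rfl
    rw [h1, hadR 1]
    unfold lieD
    rw [hVap]
    have hd3A : d3 A x = 0 := by
      rw [hA, d3_mul (ha.differentiable (by simp) x) (diff_coord_pow 2 L x), d3_coord_pow]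
      rw [hx2]
      rw [zero_pow hL0, zero_pow (by omega : L - 1 ≠ 0)]
      ring
    have hd3B : d3 B x = b x := by
      rw [hB, d3_mul (hb.differentiable (by simp) x) (diff_coord 2 x), d3_coord, hx2]
      ring
    simp only [Function.iterate_one, pow_one]
    simp only [Pi.add_apply, Pi.smul_apply, smul_eq_mul]
    rw [hd3A, hd3B]
    simp [hx2]
    exact ⟨fun h => absurd h hx1, hb0 x⟩
  · -- x 1 = 0 case
    intro hx1
    have hx0 : x 0 ≠ 0 := by
      intro h0
      apply hx
      funext i; fin_cases i <;> simp [h0, hx1, hx2]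
    refine ⟨hx0, hiter, ?_, ?_⟩
    · intro k hk1 hkL
      rw [hadR k]
      unfold lieD
      rw [hVap]
      obtain ⟨r, _, hrx⟩ := lemA L a ha k (by omega)
      have hAk : d3^[k] A x = 0 := by
        rw [hrx x, hx2, zero_pow (by omega : L - k ≠ 0),
          zero_pow (by omega : L - k + 1 ≠ 0)]
        ring
      simp only [Pi.add_apply, Pi.smul_apply, smul_eq_mul]
      rw [hAk]
      simp [hx1, hx2, zero_pow hL0]
    · rw [hadR L]
      unfold lieD
      rw [hVap]
      obtain ⟨r, _, hrx⟩ := lemA L a ha L le_rfl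
      have hAL : d3^[L] A x = (L.descFactorial L : ℝ) * a x := by
        rw [hrx x, hx2]
        simp
      simp only [Pi.add_apply, Pi.smul_apply, smul_eq_mul]
      rw [hAL]
      simp [hx1, hx2, zero_pow hL0]
      exact ⟨hx0, ha0 x⟩
end
end
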